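/- arXiv:2105.02821 — 2 statements merged into one kernel-verified Lean document; each statement's English description precedes it below -/
import Mathlib

section
/- Let Γ be a group and H a subgroup. There exists a left H-invariant mean on ℓ∞(Γ, ℝ) if and only if there exists a non-trivial H-invariant continuous linear functional ξ on ℓ∞(Γ, ℝ). -/
/-!
A mean is a positive functional with `m 1 = 1`, hence bounded and nonzero. Conversely, an
invariant `ξ ≠ 0` has an invariant modulus `|ξ|`, given on nonnegative `f` by the
Riesz–Kantorovich formula `|ξ| f = sup {ξ g : |g| ≤ f}`. The Riesz decomposition property of
`ℓ∞` makes this additive on the nonnegative cone, so it extends to a positive linear functional;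
translations preserve the order intervals `{g : |g| ≤ f}`, so `|ξ|` is invariant; and
`|ξ f| ≤ ‖f‖ |ξ| 1` forces `|ξ| 1 > 0`. The invariant mean is `|ξ| / |ξ| 1`.
-/

open scoped ENNReal

noncomputable section

/-- The space `ℓ∞(G, ℝ)` of bounded real-valued functions on `G`. -/
abbrev Linf (G : Type*) := lp (fun _ : G => ℝ) ∞

/-- `m` is a mean on `ℓ∞(G, ℝ)`. -/
def IsMean (G : Type*) (m : Linf G →ₗ[ℝ] ℝ) : Prop :=
  ∀ f : Linf G, sInf (Set.range (f : G → ℝ)) ≤ m f ∧ m f ≤ sSup (Set.range (f : G → ℝ))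

namespace ConvexCone

variable {E : Type*} [AddCommGroup E] [Module ℝ E] {C : ConvexCone ℝ E}

theorem IsReproducing.exists_sub_eq (hC : C.IsReproducing) (f : E) :
    ∃ a ∈ C, ∃ b ∈ C, a - b = f :=
  Set.mem_sub.mp (hC.sub_eq_univ ▸ Set.mem_univ f)

theorem IsReproducing.linearMap_ext (hC : C.IsReproducing) {L L' : E →ₗ[ℝ] ℝ}
    (h : Set.EqOn L L' C) : L = L' := by
  ext f
  obtain ⟨a, ha, b, hb, rfl⟩ := hC.exists_sub_eq f
  rw [map_sub, map_sub, h ha, h hb]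

theorem IsReproducing.exists_linearMap_eqOn (hC : C.IsReproducing) {q : E → ℝ}
    (hadd : ∀ a ∈ C, ∀ b ∈ C, q (a + b) = q a + q b)
    (hsmul : ∀ t : ℝ, 0 < t → ∀ a ∈ C, q (t • a) = t * q a) :
    ∃ L : E →ₗ[ℝ] ℝ, Set.EqOn L q C := by
  choose pos hpos neg hneg hsub using hC.exists_sub_eq
  -- `q a - q b` depends only on `a - b`, by additivity of `q`
  have hφ : ∀ a ∈ C, ∀ b ∈ C, q (pos (a - b)) - q (neg (a - b)) = q a - q b := by
    intro a ha b hb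
    have hab : pos (a - b) + b = a + neg (a - b) := by
      rw [← sub_eq_sub_iff_add_eq_add, hsub]
    have := congrArg q hab
    rw [hadd _ (hpos _) _ hb, hadd _ ha _ (hneg _)] at this
    linarith
  refine ⟨{ toFun := fun f => q (pos f) - q (neg f), map_add' := ?_, map_smul' := ?_ }, ?_⟩
  · intro f g
    conv_lhs => rw [← hsub f, ← hsub g, sub_add_sub_comm]
    rw [hφ _ (C.add_mem (hpos f) (hpos g)) _ (C.add_mem (hneg f) (hneg g)),
      hadd _ (hpos f) _ (hpos g), hadd _ (hneg f) _ (hneg g)]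
    ring
  · intro t f
    simp only [RingHom.id_apply, smul_eq_mul]
    rcases lt_trichotomy t 0 with ht | rfl | ht
    · have ht' : 0 < -t := neg_pos.mpr ht
      have : t • f = (-t) • neg f - (-t) • pos f := by
        conv_lhs => rw [← hsub f]
        rw [smul_sub, neg_smul, neg_smul]; abel
      rw [this, hφ _ (C.smul_mem ht' (hneg f)) _ (C.smul_mem ht' (hpos f)),
        hsmul _ ht' _ (hneg f), hsmul _ ht' _ (hpos f)]
      ring
    · rw [zero_smul, zero_mul, ← sub_self (pos f), hφ _ (hpos f) _ (hpos f), sub_self]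
    · conv_lhs => rw [← hsub f, smul_sub]
      rw [hφ _ (C.smul_mem ht (hpos f)) _ (C.smul_mem ht (hneg f)),
        hsmul _ ht _ (hpos f), hsmul _ ht _ (hneg f)]
      ring
  · intro a ha
    have := hφ _ (C.add_mem ha ha) _ ha
    simp only [add_sub_cancel_right, hadd _ ha _ ha] at this
    simpa only [LinearMap.coe_mk, AddHom.coe_mk] using this

end ConvexCone

open scoped Pointwise

namespace Linf

variable {X : Type*}

@[simp] theorem add_apply (f g : Linf X) (x : X) : (f + g) x = f x + g x := rfl
@[simp] theorem sub_apply (f g : Linf X) (x : X) : (f - g) x = f x - g x := rfl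

theorem abs_apply_le_norm (f : Linf X) (x : X) : |f x| ≤ ‖f‖ :=
  lp.norm_apply_le_norm ENNReal.top_ne_zero f x

theorem memℓp_infty_of_abs_le {v : X → ℝ} {C : ℝ} (hv : ∀ x, |v x| ≤ C) : Memℓp v ∞ :=
  memℓp_infty ⟨C, by rintro _ ⟨x, rfl⟩; exact hv x⟩

def compPerm (σ : Equiv.Perm X) : Linf X →ₗ[ℝ] Linf X where
  toFun f := ⟨f ∘ σ, memℓp_infty_of_abs_le fun x => abs_apply_le_norm f (σ x)⟩
  map_add' _ _ := rfl
  map_smul' _ _ := rfl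

@[simp]
theorem compPerm_apply (σ : Equiv.Perm X) (f : Linf X) (x : X) : compPerm σ f x = f (σ x) := rfl

variable (X) in
def nonnegCone : ConvexCone ℝ (Linf X) where
  carrier := {f | ∀ x, 0 ≤ f x}
  smul_mem' t ht f hf x := by simpa using mul_nonneg ht.le (hf x)
  add_mem' f hf g hg x := by simpa using add_nonneg (hf x) (hg x)

theorem isReproducing_nonnegCone : (nonnegCone X).IsReproducing := by
  refine Set.eq_univ_of_forall fun f => ⟨f + ‖f‖ • 1, fun x => ?_, ‖f‖ • 1, fun x => ?_, ?_⟩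
  · simpa [neg_le_iff_add_nonneg] using (abs_le.mp (abs_apply_le_norm f x)).1
  · simp
  · simp

def orderInterval (f : Linf X) : Set (Linf X) := {g | ∀ x, |g x| ≤ f x}

theorem zero_mem_orderInterval {f : Linf X} (hf : f ∈ nonnegCone X) : 0 ∈ orderInterval f :=
  fun x => by simpa using hf x

theorem mem_nonnegCone_of_mem_orderInterval {f g : Linf X} (hg : g ∈ orderInterval f) :
    f ∈ nonnegCone X :=
  fun x => (abs_nonneg _).trans (hg x)

theorem norm_le_of_mem_orderInterval {f g : Linf X} (hg : g ∈ orderInterval f) : ‖g‖ ≤ ‖f‖ :=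
  lp.norm_le_of_forall_le (norm_nonneg f) fun x =>
    (hg x).trans ((le_abs_self _).trans (abs_apply_le_norm f x))

private theorem abs_clamp_le {a b c : ℝ} (ha : 0 ≤ a) (hb : 0 ≤ b) (hc : |c| ≤ a + b) :
    |max (-a) (min a c)| ≤ a ∧ |c - max (-a) (min a c)| ≤ b := by
  rw [abs_le] at hc
  constructor <;> rw [abs_le] <;> constructor <;>
    simp only [max_def, min_def] <;> split_ifs <;> linarith

theorem orderInterval_add {f₁ f₂ : Linf X} (hf₁ : f₁ ∈ nonnegCone X) (hf₂ : f₂ ∈ nonnegCone X) :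
    orderInterval (f₁ + f₂) = orderInterval f₁ + orderInterval f₂ := by
  ext g
  constructor
  · intro hg
    have hclamp x := abs_clamp_le (hf₁ x) (hf₂ x) (by simpa using hg x)
    let g₁ : Linf X := ⟨fun x => max (-f₁ x) (min (f₁ x) (g x)), memℓp_infty_of_abs_le fun x =>
      (hclamp x).1.trans ((le_abs_self _).trans (abs_apply_le_norm f₁ x))⟩
    exact ⟨g₁, fun x => (hclamp x).1, g - g₁, fun x => by simpa using (hclamp x).2,
      add_sub_cancel _ _⟩
  · rintro ⟨g₁, hg₁, g₂, hg₂, rfl⟩ x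
    simpa using (abs_add_le _ _).trans (add_le_add (hg₁ x) (hg₂ x))

theorem orderInterval_smul {t : ℝ} (ht : 0 < t) (f : Linf X) :
    orderInterval (t • f) = t • orderInterval f := by
  ext g
  rw [Set.mem_smul_set_iff_inv_smul_mem₀ ht.ne']
  refine forall_congr' fun x => ?_
  simp [abs_mul, abs_of_pos ht, inv_mul_le_iff₀ ht]

theorem orderInterval_compPerm (σ : Equiv.Perm X) (f : Linf X) :
    orderInterval (compPerm σ f) = compPerm σ '' orderInterval f := by
  ext g
  constructor
  · intro hg
    refine ⟨compPerm σ⁻¹ g, fun x => by simpa using hg (σ⁻¹ x), lp.ext (funext fun x => by simp)⟩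
  · rintro ⟨g, hg, rfl⟩ x
    exact hg (σ x)

variable (ξ : Linf X →L[ℝ] ℝ)

def absOnCone (f : Linf X) : ℝ := sSup (ξ '' orderInterval f)

theorem bddAbove_image_orderInterval (f : Linf X) : BddAbove (ξ '' orderInterval f) := by
  refine ⟨‖ξ‖ * ‖f‖, ?_⟩
  rintro _ ⟨g, hg, rfl⟩
  exact (le_abs_self _).trans ((ξ.le_opNorm g).trans
    (mul_le_mul_of_nonneg_left (norm_le_of_mem_orderInterval hg) (norm_nonneg ξ)))

theorem le_absOnCone {f g : Linf X} (hg : g ∈ orderInterval f) : ξ g ≤ absOnCone ξ f :=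
  le_csSup (bddAbove_image_orderInterval ξ f) ⟨g, hg, rfl⟩

theorem absOnCone_add {f₁ f₂ : Linf X} (hf₁ : f₁ ∈ nonnegCone X) (hf₂ : f₂ ∈ nonnegCone X) :
    absOnCone ξ (f₁ + f₂) = absOnCone ξ f₁ + absOnCone ξ f₂ := by
  rw [absOnCone, orderInterval_add hf₁ hf₂, Set.image_add,
    csSup_add ((Set.nonempty_of_mem (zero_mem_orderInterval hf₁)).image ξ)
      (bddAbove_image_orderInterval ξ f₁)
      ((Set.nonempty_of_mem (zero_mem_orderInterval hf₂)).image ξ)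
      (bddAbove_image_orderInterval ξ f₂)]
  rfl

theorem absOnCone_smul {t : ℝ} (ht : 0 < t) (f : Linf X) :
    absOnCone ξ (t • f) = t * absOnCone ξ f := by
  rw [absOnCone, orderInterval_smul ht, image_smul_set, Real.sSup_smul_of_nonneg ht.le]
  rfl

theorem absOnCone_compPerm {σ : Equiv.Perm X} (hξ : ∀ f, ξ (compPerm σ f) = ξ f) (f : Linf X) :
    absOnCone ξ (compPerm σ f) = absOnCone ξ f := by
  rw [absOnCone, orderInterval_compPerm, Set.image_image]
  simp only [hξ]
  rfl

theorem exists_linearMap_eqOn_absOnCone :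
    ∃ L : Linf X →ₗ[ℝ] ℝ, Set.EqOn L (absOnCone ξ) (nonnegCone X) :=
  isReproducing_nonnegCone.exists_linearMap_eqOn (fun _ hf₁ _ hf₂ => absOnCone_add ξ hf₁ hf₂)
    fun _ ht f _ => absOnCone_smul ξ ht f

def absFunctional : Linf X →ₗ[ℝ] ℝ := (exists_linearMap_eqOn_absOnCone ξ).choose

theorem absFunctional_eq {f : Linf X} (hf : f ∈ nonnegCone X) :
    absFunctional ξ f = absOnCone ξ f :=
  (exists_linearMap_eqOn_absOnCone ξ).choose_spec hf

theorem absFunctional_nonneg {f : Linf X} (hf : f ∈ nonnegCone X) : 0 ≤ absFunctional ξ f := by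
  rw [absFunctional_eq ξ hf, ← map_zero ξ]
  exact le_absOnCone ξ (zero_mem_orderInterval hf)

theorem abs_le_absFunctional {f g : Linf X} (hg : g ∈ orderInterval f) :
    |ξ g| ≤ absFunctional ξ f := by
  rw [absFunctional_eq ξ (mem_nonnegCone_of_mem_orderInterval hg), abs_le, neg_le, ← map_neg]
  exact ⟨le_absOnCone ξ fun x => by simpa using hg x, le_absOnCone ξ hg⟩

theorem absFunctional_one_pos (hξ : ξ ≠ 0) : 0 < absFunctional ξ 1 := by
  obtain ⟨f, hf⟩ : ∃ f, ξ f ≠ 0 := by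
    by_contra! h
    exact hξ (ContinuousLinearMap.ext h)
  have hle : |ξ f| ≤ ‖f‖ * absFunctional ξ 1 := by
    rw [← smul_eq_mul, ← map_smul]
    exact abs_le_absFunctional ξ fun x => by simpa using abs_apply_le_norm f x
  exact pos_of_mul_pos_right ((abs_pos.mpr hf).trans_le hle) (norm_nonneg f)

theorem absFunctional_comp_compPerm {σ : Equiv.Perm X} (hξ : ∀ f, ξ (compPerm σ f) = ξ f) :
    absFunctional ξ ∘ₗ compPerm σ = absFunctional ξ :=
  isReproducing_nonnegCone.linearMap_ext fun f hf => by
    rw [LinearMap.comp_apply, absFunctional_eq ξ hf, absFunctional_eq ξ fun x => hf (σ x),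
      absOnCone_compPerm ξ hξ]

end Linf

namespace IsMean

variable {X : Type*} {m : Linf X →ₗ[ℝ] ℝ}

theorem of_nonneg (hm : ∀ f ∈ Linf.nonnegCone X, 0 ≤ m f) (h1 : m 1 = 1) : IsMean X m := by
  intro f
  have hbdd : BddBelow (Set.range f) ∧ BddAbove (Set.range f) := by
    refine ⟨⟨-‖f‖, ?_⟩, ⟨‖f‖, ?_⟩⟩ <;> rintro _ ⟨x, rfl⟩
    exacts [(abs_le.mp (Linf.abs_apply_le_norm f x)).1, (abs_le.mp (Linf.abs_apply_le_norm f x)).2]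
  have hinf := hm (f - sInf (Set.range f) • 1) fun x => by
    simpa using csInf_le hbdd.1 ⟨x, rfl⟩
  have hsup := hm (sSup (Set.range f) • 1 - f) fun x => by
    simpa using le_csSup hbdd.2 ⟨x, rfl⟩
  simp only [map_sub, map_smul, h1, smul_eq_mul, mul_one, sub_nonneg] at hinf hsup
  exact ⟨hinf, hsup⟩

theorem norm_le (hm : IsMean X m) (f : Linf X) : ‖m f‖ ≤ ‖f‖ := by
  have hf x := abs_le.mp (Linf.abs_apply_le_norm f x)
  rw [Real.norm_eq_abs, abs_le]
  exact ⟨(Real.le_sInf (by rintro _ ⟨x, rfl⟩; exact (hf x).1) (by simp)).trans (hm f).1,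
    (hm f).2.trans (Real.sSup_le (by rintro _ ⟨x, rfl⟩; exact (hf x).2) (norm_nonneg f))⟩

theorem map_one [Nonempty X] (hm : IsMean X m) : m 1 = 1 := by
  have hrange : Set.range ((1 : Linf X) : X → ℝ) = {1} := Set.range_const
  have := hm 1
  rw [hrange, csInf_singleton, csSup_singleton] at this
  exact le_antisymm this.2 this.1

end IsMean

/-- There exists a left `H`-invariant mean on `ℓ∞(Γ, ℝ)` if and only if
there exists a non-trivial `H`-invariant continuous linear functional on `ℓ∞(Γ, ℝ)`.
Here `H` acts by left translation `(h • f) x = f (h⁻¹ * x)` and a functional `ξ` is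
`H`-invariant when `ξ (h • f) = ξ f`. -/
theorem exists_invariant_mean_iff_exists_invariant_functional
    {Γ : Type*} [Group Γ] (H : Subgroup Γ) :
    (∃ m : Linf Γ →ₗ[ℝ] ℝ, IsMean Γ m ∧
        ∀ h ∈ H, ∀ f f' : Linf Γ, (∀ x : Γ, f' x = f (h⁻¹ * x)) → m f' = m f) ↔
      (∃ ξ : Linf Γ →L[ℝ] ℝ, ξ ≠ 0 ∧
        ∀ h ∈ H, ∀ f f' : Linf Γ, (∀ x : Γ, f' x = f (h⁻¹ * x)) → ξ f' = ξ f) := by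
  constructor
  · rintro ⟨m, hm, hinv⟩
    refine ⟨m.mkContinuous 1 fun f => by simpa using hm.norm_le f, fun h0 => ?_, hinv⟩
    have := congr($h0 1)
    simp [hm.map_one] at this
  · rintro ⟨ξ, hξ, hinv⟩
    refine ⟨(Linf.absFunctional ξ 1)⁻¹ • Linf.absFunctional ξ,
      IsMean.of_nonneg (fun f hf => ?_) ?_, fun h hh f f' hf' => ?_⟩
    · exact mul_nonneg (inv_nonneg.mpr (Linf.absFunctional_one_pos ξ hξ).le)
        (Linf.absFunctional_nonneg ξ hf)
    · exact inv_mul_cancel₀ (Linf.absFunctional_one_pos ξ hξ).ne'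
    · have hξσ f : ξ (Linf.compPerm (Equiv.mulLeft h⁻¹) f) = ξ f := hinv h hh f _ fun _ => rfl
      obtain rfl : f' = Linf.compPerm (Equiv.mulLeft h⁻¹) f := lp.ext (funext hf')
      rw [LinearMap.smul_apply, LinearMap.smul_apply, ← LinearMap.comp_apply,
        Linf.absFunctional_comp_compPerm ξ hξσ]
end
end

section
/- Let Γ be a group and H ⊴ Γ a normal subgroup. Suppose there exists an H-equivariant map α : H → ℓ¹₀(Γ) (where ℓ¹₀(Γ) is the kernel of the summation map on ℓ¹(Γ)) such that α(h₁) − α(h₀) = δ_{h₁} − δ_{h₀} in ℓ¹(Γ) for all h₀, h₁ ∈ H. Then H is finite. -/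
noncomputable section

/-- Let `H ⊴ Γ` and suppose there is an `H`-equivariant map
`α : H → ℓ¹₀(Γ)` (values in the kernel of the summation map `σ : ℓ¹(Γ) → ℝ`) such that
`α(h₁) - α(h₀) = δ_{h₁} - δ_{h₀}` in `ℓ¹(Γ)` for all `h₀, h₁ ∈ H`.  Then `H` is finite.
Here `Γ` acts on `ℓ¹(Γ)` by left translation `(g·f)(x) = f(g⁻¹x)`, `H`-equivariance means
`α(h'h) = h'·α(h)`, and `δ_g` is the indicator function of `{g}`. -/
theorem finite_of_l1_johnson_coboundary
    {Γ : Type*} [Group Γ] [DecidableEq Γ] (H : Subgroup Γ) [H.Normal]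
    (α : H → lp (fun _ : Γ => ℝ) 1)
    -- values lie in `ℓ¹₀(Γ) = ker σ`
    (hsum : ∀ h : H, ∑' x : Γ, α h x = 0)
    -- `H`-equivariance: `α (h' * h) = h' · α h`
    (hequiv : ∀ h' h : H, ∀ x : Γ, α (h' * h) x = α h ((h' : Γ)⁻¹ * x))
    -- coboundary condition: `α h₁ - α h₀ = δ_{h₁} - δ_{h₀}`
    (hcob : ∀ h₀ h₁ : H, ∀ x : Γ,
      α h₁ x - α h₀ x =
        (if x = (h₁ : Γ) then (1 : ℝ) else 0) - (if x = (h₀ : Γ) then (1 : ℝ) else 0)) :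
    Finite H := by
  by_contra hfin
  rw [not_finite_iff_infinite] at hfin
  -- ξ = δ₁ - α 1
  set f : Γ → ℝ := fun x => (if x = (1 : Γ) then (1 : ℝ) else 0) - α 1 x with hf
  -- summability of α 1
  have hαs : Summable fun x => α 1 x := by
    have := (lp.memℓp (α 1)).summable (by norm_num : (0:ℝ) < (1 : ENNReal).toReal)
    simp only [ENNReal.toReal_one, Real.rpow_one] at this
    exact this.of_norm
  have hδs : Summable fun x : Γ => (if x = (1 : Γ) then (1 : ℝ) else 0) := by
    apply summable_of_ne_finset_zero (s := {1})
    intro x hx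
    simp only [Finset.mem_singleton] at hx
    simp [hx]
  have hfs : Summable f := hδs.sub hαs
  -- total sum is 1
  have htsum : ∑' x, f x = 1 := by
    rw [hf, Summable.tsum_sub hδs hαs, hsum 1, tsum_ite_eq]
    ring
  -- H-invariance of f
  have hinv : ∀ (h : H) (x : Γ), f ((h : Γ)⁻¹ * x) = f x := by
    intro h x
    have h1 : α h x - α 1 x =
        (if x = (h : Γ) then (1 : ℝ) else 0) - (if x = (1 : Γ) then (1 : ℝ) else 0) := by
      simpa using hcob 1 h x
    have h2 : α h x = α 1 ((h : Γ)⁻¹ * x) := by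
      simpa using hequiv h 1 x
    have h3 : ((h : Γ)⁻¹ * x = (1 : Γ)) ↔ x = (h : Γ) := by
      constructor
      · intro hx; have := congrArg (fun y => (h : Γ) * y) hx; simpa using this
      · intro hx; simp [hx]
    simp only [hf]
    rw [← h2]
    have : (if (h : Γ)⁻¹ * x = (1 : Γ) then (1:ℝ) else 0)
        = (if x = (h : Γ) then (1:ℝ) else 0) := by simp [h3]
    rw [this]
    linarith [h1]
  -- some point where f is nonzero
  have hex : ∃ x, f x ≠ 0 := by
    by_contra hc
    push_neg at hc
    rw [tsum_congr hc] at htsum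
    simp at htsum
  obtain ⟨x, hx⟩ := hex
  -- f is constant = f x on the infinite set { h⁻¹ x : h ∈ H }
  have hinj : Function.Injective (fun h : H => (h : Γ)⁻¹ * x) := by
    intro a b hab
    simp only [mul_left_inj, inv_inj] at hab
    exact Subtype.coe_injective hab
  have hcomp : Summable (fun h : H => f ((h : Γ)⁻¹ * x)) := hfs.comp_injective hinj
  have hconst : (fun h : H => f ((h : Γ)⁻¹ * x)) = fun _ => f x := by
    funext h; exact hinv h x
  rw [hconst] at hcomp
  have := hcomp.tendsto_cofinite_zero
  have := Filter.cofinite_neBot (α := H)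
  exact hx (tendsto_nhds_unique ‹Filter.Tendsto (fun _ : H => f x) Filter.cofinite (nhds 0)› tendsto_const_nhds).symm
end
end
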